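/- arXiv:math/0509097 — 6 statements merged into one kernel-verified Lean document; each statement's English description precedes it below -/
import Mathlib

section
/- Kuratowski's function f is continuous at every point of E, i.e., at every x ∈ C whose support is infinite. -/
open Set Topology

/-- The Cantor space `2^ℕ`, with coordinates indexed by the positive integers. -/
abbrev Cant : Type := ℕ+ → Bool

/-- The support of a point of the Cantor space, as a set of (positive) natural numbers. -/
def ksupp (x : Cant) : Set ℕ := {i | ∃ h : 0 < i, x ⟨i, h⟩ = true}

open scoped Classical in
/-- Kuratowski's function `f(x) = Σ_j (−1)^{c_x(j)} 2^{−j}`, where `c_x` enumerates the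
support of `x` in increasing order; here the summation index `j : ℕ` is the 0-based
version of the paper's 1-based position index, so the weight is `2^{−(j+1)}`. -/
noncomputable def kf (x : Cant) : ℝ :=
  ∑' j : ℕ, if (ksupp x).Infinite ∨ j < (ksupp x).ncard then
    (-1 : ℝ) ^ (Nat.nth (· ∈ ksupp x) j) * (2 : ℝ) ^ (-(j + 1 : ℤ)) else 0

open Filter

/- Each summand of `kf` depends only on finitely many coordinates near a point with infinite
support: the `j`-th support element of `y` is that of `x` as soon as `y` agrees with `x` up to
it. Hence every summand is locally constant at such a point, and the Weierstrass M-test with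
the bound `2^{-j}` makes the series continuous there. -/

theorem continuousAt_tsum {α β F : Type*} [NormedAddCommGroup F] [CompleteSpace F]
    [TopologicalSpace β] {f : α → β → F} {u : α → ℝ} {x : β}
    (hf : ∀ i, ContinuousAt (f i) x) (hu : Summable u) (hfu : ∀ n y, ‖f n y‖ ≤ u n) :
    ContinuousAt (fun y => ∑' n, f n y) x := by
  refine continuousAt_of_locally_uniform_approx_of_continuousAt fun v hv => ?_
  obtain ⟨t, ht⟩ := (tendstoUniformly_tsum hu hfu v hv).exists
  exact ⟨univ, univ_mem, _, tendsto_finsetSum t fun i _ => hf i, fun y _ => ht y⟩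

namespace Nat

variable {p q : ℕ → Prop} [DecidablePred p] [DecidablePred q]

theorem count_eq_count_of_forall_lt_iff {m : ℕ} (h : ∀ n < m, q n ↔ p n) :
    count q m = count p m := by
  simp only [count_eq_card_filter_range]
  exact congrArg Finset.card (Finset.filter_congr fun n hn => h n (Finset.mem_range.1 hn))

theorem count_nth_of_forall_le_iff (hp : (Set.ofPred p).Infinite) {j m : ℕ} (hj : nth p j ≤ m)
    (h : ∀ n ≤ m, q n ↔ p n) : count q (nth p j) = j := by
  rw [count_eq_count_of_forall_lt_iff fun n hn => h n (by omega), count_nth_of_infinite hp]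

theorem nth_eq_nth_of_forall_le_iff (hp : (Set.ofPred p).Infinite) {j m : ℕ} (hj : nth p j ≤ m)
    (h : ∀ n ≤ m, q n ↔ p n) : nth q j = nth p j := by
  have hq : q (nth p j) := (h _ hj).2 (nth_mem_of_infinite hp j)
  simpa only [count_nth_of_forall_le_iff hp hj h] using nth_count hq

theorem lt_card_of_forall_le_iff (hp : (Set.ofPred p).Infinite) {j m : ℕ} (hj : nth p j ≤ m)
    (h : ∀ n ≤ m, q n ↔ p n) (hq : (Set.ofPred q).Finite) : j < hq.toFinset.card := by
  have := count_lt_card hq ((h _ hj).2 (nth_mem_of_infinite hp j))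
  rwa [count_nth_of_forall_le_iff hp hj h] at this

end Nat

open scoped Classical in
noncomputable def kterm (x : Cant) (j : ℕ) : ℝ :=
  if (ksupp x).Infinite ∨ j < (ksupp x).ncard then
    (-1 : ℝ) ^ (Nat.nth (· ∈ ksupp x) j) * (2 : ℝ) ^ (-(j + 1 : ℤ)) else 0

theorem norm_kterm_le (x : Cant) (j : ℕ) : ‖kterm x j‖ ≤ (1 / 2 : ℝ) ^ j := by
  unfold kterm
  split_ifs
  · rw [norm_mul, norm_pow, norm_neg, norm_one, one_pow, one_mul, norm_zpow, Real.norm_ofNat,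
      zpow_neg, ← Nat.cast_succ, zpow_natCast, ← inv_pow, one_div]
    exact pow_le_pow_of_le_one (by norm_num) (by norm_num) j.le_succ
  · simp

theorem kterm_eq_of_forall_le_iff {x y : Cant} (hx : (ksupp x).Infinite) {j m : ℕ}
    (hj : Nat.nth (· ∈ ksupp x) j ≤ m) (h : ∀ n ≤ m, n ∈ ksupp y ↔ n ∈ ksupp x) :
    kterm y j = kterm x j := by
  classical
  have hlt : (ksupp y).Infinite ∨ j < (ksupp y).ncard := by
    refine or_iff_not_imp_left.2 fun hy => ?_
    have hy : (ksupp y).Finite := not_infinite.1 hy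
    rw [ncard_eq_toFinset_card _ hy]
    exact Nat.lt_card_of_forall_le_iff (p := (· ∈ ksupp x)) hx hj h hy
  unfold kterm
  rw [if_pos hlt, if_pos (Or.inl hx),
    Nat.nth_eq_nth_of_forall_le_iff (p := (· ∈ ksupp x)) hx hj h]

theorem eventually_forall_le_mem_ksupp_iff (x : Cant) (m : ℕ) :
    ∀ᶠ y in 𝓝 x, ∀ n ≤ m, n ∈ ksupp y ↔ n ∈ ksupp x := by
  refine (eventually_all_finite (finite_Iic m)).2 fun n _ => ?_
  rcases n.eq_zero_or_pos with rfl | hn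
  · exact Eventually.of_forall fun y => by simp [ksupp]
  · have : Tendsto (fun y : Cant => y ⟨n, hn⟩) (𝓝 x) (pure (x ⟨n, hn⟩)) :=
      nhds_discrete Bool ▸ (continuous_apply _).tendsto x
    exact (tendsto_pure.1 this).mono fun y hy => by simp [ksupp, hn, hy]

theorem continuousAt_kterm {x : Cant} (hx : (ksupp x).Infinite) (j : ℕ) :
    ContinuousAt (kterm · j) x :=
  continuousAt_const.congr <| (eventually_forall_le_mem_ksupp_iff x _).mono
    fun _ h => (kterm_eq_of_forall_le_iff hx le_rfl h).symm

/-- Kuratowski's function is continuous at every point of `E`,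
i.e. at every point whose support is infinite. -/
theorem kf_continuousAt_of_infinite_support (x : Cant) (hx : (ksupp x).Infinite) :
    ContinuousAt kf x :=
  continuousAt_tsum (continuousAt_kterm hx)
    (summable_geometric_of_lt_one (by norm_num) (by norm_num)) fun j y => norm_kterm_le y j
end

section
/- Kuratowski's function f is discontinuous at every point of D, i.e., at every x ∈ C whose support is finite. -/
open Set Topology

/-! If `supp x` is finite with `k` elements, switching on one more coordinate `p > max (supp x)`
appends `p` as the `(k+1)`-st element of the support, which changes `f` by `(-1)^p 2^{-(k+1)}`
whatever `p` is. For even `p → ∞` these points converge to `x`, while `f` is constantly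
`f(x) + 2^{-(k+1)}` on them. -/

open Filter

open scoped Classical in
lemma Nat.count_mem_insert_of_le {S : Set ℕ} {m a : ℕ} (ha : a ≤ m) :
    Nat.count (· ∈ insert m S) a = Nat.count (· ∈ S) a := by
  simp only [Nat.count_eq_card_filter_range]
  exact congrArg _ <| Finset.filter_congr fun i hi =>
    or_iff_right (Finset.mem_range.mp hi |>.trans_le ha).ne

open scoped Classical in
lemma Nat.count_mem_eq_ncard {S : Set ℕ} (hS : S.Finite) {m : ℕ} (hm : ∀ a ∈ S, a < m) :
    Nat.count (· ∈ S) m = S.ncard := by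
  rw [Nat.count_eq_card_filter_range, ncard_eq_toFinset_card S hS]
  congr 1
  ext i
  simpa using hm i

lemma Nat.nth_mem_insert_of_lt_ncard {S : Set ℕ} (hS : S.Finite) {m : ℕ}
    (hm : ∀ a ∈ S, a < m) {j : ℕ} (hj : j < S.ncard) :
    Nat.nth (· ∈ insert m S) j = Nat.nth (· ∈ S) j := by
  classical
  rw [ncard_eq_toFinset_card S hS] at hj
  have hmem : Nat.nth (· ∈ S) j ∈ S := Nat.nth_mem_of_lt_card hS hj
  have := Nat.nth_count (p := (· ∈ insert m S)) (mem_insert_of_mem m hmem)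
  rwa [Nat.count_mem_insert_of_le (hm _ hmem).le,
    Nat.count_nth_of_lt_card_finite (p := (· ∈ S)) hS hj] at this

lemma Nat.nth_mem_insert_ncard {S : Set ℕ} (hS : S.Finite) {m : ℕ} (hm : ∀ a ∈ S, a < m) :
    Nat.nth (· ∈ insert m S) S.ncard = m := by
  classical
  have := Nat.nth_count (p := (· ∈ insert m S)) (mem_insert m S)
  rwa [Nat.count_mem_insert_of_le le_rfl, Nat.count_mem_eq_ncard hS hm] at this

lemma tendsto_update_of_tendsto_cofinite {α ι β : Type*} [TopologicalSpace β] [DecidableEq ι]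
    (x : ι → β) {l : Filter α} {p : α → ι} (hp : Tendsto p l cofinite) (b : β) :
    Tendsto (fun a => Function.update x (p a) b) l (𝓝 x) := by
  refine tendsto_pi_nhds.mpr fun i => tendsto_const_nhds.congr' ?_
  filter_upwards [hp.eventually (eventually_cofinite_ne i)] with a ha
  exact (Function.update_of_ne (Ne.symm ha) b x).symm

lemma ksupp_update_true (x : Cant) (p : ℕ+) :
    ksupp (Function.update x p true) = insert (p : ℕ) (ksupp x) := by
  ext i
  rcases eq_or_ne i p with rfl | hip
  · exact iff_of_true ⟨p.pos, Function.update_self p true x⟩ (mem_insert _ _)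
  · rw [mem_insert_iff, or_iff_right hip]
    refine exists_congr fun h => iff_of_eq (congrArg (· = true) ?_)
    have hne : (⟨i, h⟩ : ℕ+) ≠ p := fun h' => hip (congrArg PNat.val h')
    exact Function.update_of_ne hne true x

lemma kf_eq_sum_of_finite {x : Cant} (hx : (ksupp x).Finite) :
    kf x = ∑ j ∈ Finset.range (ksupp x).ncard,
      (-1 : ℝ) ^ Nat.nth (· ∈ ksupp x) j * (2 : ℝ) ^ (-(j + 1 : ℤ)) := by
  rw [kf, tsum_eq_sum (s := Finset.range (ksupp x).ncard)]
  · exact Finset.sum_congr rfl fun j hj => if_pos (.inr (Finset.mem_range.mp hj))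
  · intro j hj
    rw [Finset.mem_range] at hj
    simp [hx, hj]

lemma kf_update_true_of_forall_lt {x : Cant} (hx : (ksupp x).Finite) {p : ℕ+}
    (hp : ∀ a ∈ ksupp x, a < p) :
    kf (Function.update x p true) =
      kf x + (-1 : ℝ) ^ (p : ℕ) * (2 : ℝ) ^ (-((ksupp x).ncard + 1 : ℤ)) := by
  have hp_notMem : (p : ℕ) ∉ ksupp x := fun h => (hp _ h).false
  rw [kf_eq_sum_of_finite (ksupp_update_true x p ▸ hx.insert _), kf_eq_sum_of_finite hx,
    ksupp_update_true, ncard_insert_of_notMem hp_notMem hx, Finset.sum_range_succ,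
    Nat.nth_mem_insert_ncard hx hp]
  congr 1
  refine Finset.sum_congr rfl fun j hj => ?_
  rw [Nat.nth_mem_insert_of_lt_ncard hx hp (Finset.mem_range.mp hj)]

/-- Kuratowski's function is discontinuous at every point of `D`,
i.e. at every point whose support is finite. -/
theorem kf_not_continuousAt_of_finite_support (x : Cant) (hx : (ksupp x).Finite) :
    ¬ ContinuousAt kf x := by
  obtain ⟨M, hM⟩ := hx.bddAbove
  let p : ℕ → ℕ+ := fun n => ⟨2 * (M + n + 1), by omega⟩
  have hp_lt (n : ℕ) : ∀ a ∈ ksupp x, a < p n := fun a ha => by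
    have := hM ha
    simp only [p, PNat.mk_coe]
    omega
  have hp_even (n : ℕ) : Even (p n : ℕ) := even_two_mul _
  have hp_tendsto : Tendsto p atTop cofinite := by
    rw [← Nat.cofinite_eq_atTop]
    exact Function.Injective.tendsto_cofinite fun m n h => by
      simpa [p] using congrArg PNat.val h
  intro hcont
  have hlim := hcont.tendsto.comp (tendsto_update_of_tendsto_cofinite x hp_tendsto true)
  simp only [Function.comp_def, kf_update_true_of_forall_lt hx (hp_lt _),
    (hp_even _).neg_one_pow, one_mul, tendsto_const_nhds_iff, add_eq_left] at hlim
  exact (zpow_pos two_pos _).ne' hlim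
end

section
/- For every t ∈ [−1,1], the preimage f⁻¹({t}) under Kuratowski's function is uncountable. -/
open Set Topology

/-!
On a point with infinite support, `f` only sees the parities of `c_x(1), c_x(2), …`:
`f(x) = 1 - 2 · 0.p₁p₂p₃…` in binary, where `p_j = c_x(j) mod 2`. Given `t ∈ [-1, 1]`, fix a
binary expansion `d` of `(1 - t)/2`. Every subset `s ⊆ ℕ` yields a strictly increasing sequence
whose `n`-th term has parity `d n` and which also records whether `n ∈ s`; the points with these
sequences as supports all lie in `f⁻¹({t})` and are pairwise distinct, so the fibre contains a
copy of the uncountable set `2^ℕ`.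
-/

instance : Uncountable (Set ℕ) :=
  Cardinal.aleph0_lt_mk_iff.mp (Cardinal.mk_set_nat ▸ Cardinal.aleph0_lt_continuum)

lemma StrictMono.nth_range {c : ℕ → ℕ} (hc : StrictMono c) : Nat.nth (· ∈ range c) = c := by
  have hinf : (range c).Infinite := infinite_range_of_injective hc.injective
  exact (Nat.nth_strictMono hinf).range_inj hc |>.mp (Nat.range_nth_of_infinite hinf)

lemma neg_one_pow_eq_one_sub_two_mul_ofNat (n : ℕ) :
    (-1 : ℝ) ^ n = 1 - 2 * (Fin.ofNat 2 n : ℕ) := by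
  rw [neg_one_pow_eq_pow_mod_two, Fin.val_ofNat]
  rcases Nat.mod_two_eq_zero_or_one n with h | h <;> norm_num [h]

lemma kf_eq_one_sub_two_mul_ofDigits {x : Cant} (hx : (ksupp x).Infinite) :
    kf x = 1 - 2 * Real.ofDigits (fun j ↦ Fin.ofNat 2 (Nat.nth (· ∈ ksupp x) j)) := by
  have hweights : HasSum (fun j : ℕ ↦ ((2 : ℝ) ^ (j + 1))⁻¹) 1 := by
    convert hasSum_geometric_two' 1 using 1
    ext j
    rw [pow_succ]
    field_simp
  have hdigits :=
    (Real.summable_ofDigitsTerm (digits := fun j ↦ Fin.ofNat 2 (Nat.nth (· ∈ ksupp x) j))).hasSum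
  rw [Real.ofDigits, ← (hweights.sub (hdigits.mul_left 2)).tsum_eq, kf]
  refine tsum_congr fun j ↦ ?_
  rw [if_pos (Or.inl hx), neg_one_pow_eq_one_sub_two_mul_ofNat, zpow_neg, Real.ofDigitsTerm,
    show ((j : ℤ) + 1) = ((j + 1 : ℕ) : ℤ) by push_cast; rfl, zpow_natCast, Nat.cast_ofNat]
  ring

open scoped Classical in
noncomputable def cantOfSet (s : Set ℕ) : Cant := fun i ↦ decide ((i : ℕ) ∈ s)

open scoped Classical in
lemma ksupp_cantOfSet {s : Set ℕ} (hs : 0 ∉ s) : ksupp (cantOfSet s) = s := by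
  ext i
  refine ⟨fun ⟨_, hi⟩ ↦ of_decide_eq_true hi, fun hi ↦ ⟨Nat.pos_of_ne_zero ?_, decide_eq_true hi⟩⟩
  rintro rfl
  exact hs hi

/-- The `n`-th term lies in the block `[4(n+1), 4(n+2))`, has parity `d n`, and its bit of
weight `2` records whether `n ∈ s`. -/
noncomputable def parityCode (d : ℕ → Fin 2) (s : Set ℕ) (n : ℕ) : ℕ :=
  4 * (n + 1) + 2 * s.indicator 1 n + d n

lemma parityCode_mem_Ico (d : ℕ → Fin 2) (s : Set ℕ) (n : ℕ) :
    parityCode d s n ∈ Ico (4 * (n + 1)) (4 * (n + 2)) := by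
  have hind : s.indicator 1 n ≤ 1 := indicator_apply_le' (fun _ ↦ le_rfl) (fun _ ↦ zero_le_one)
  have hd := (d n).isLt
  simp only [parityCode, mem_Ico]
  omega

lemma parityCode_strictMono (d : ℕ → Fin 2) (s : Set ℕ) : StrictMono (parityCode d s) :=
  strictMono_nat_of_lt_succ fun n ↦
    (parityCode_mem_Ico d s n).2.trans_le (parityCode_mem_Ico d s (n + 1)).1

lemma zero_notMem_range_parityCode (d : ℕ → Fin 2) (s : Set ℕ) : 0 ∉ range (parityCode d s) := by
  rintro ⟨n, hn⟩
  simp [parityCode] at hn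

lemma ofNat_parityCode (d : ℕ → Fin 2) (s : Set ℕ) (n : ℕ) :
    Fin.ofNat 2 (parityCode d s n) = d n := by
  ext
  have hd := (d n).isLt
  simp only [parityCode, Fin.val_ofNat]
  omega

lemma parityCode_injective (d : ℕ → Fin 2) : Function.Injective (parityCode d) := by
  intro s s' h
  refine indicator_one_inj (M₀ := ℕ) (funext fun n ↦ ?_)
  have := congrFun h n
  simp only [parityCode] at this
  omega

noncomputable def parityPoint (d : ℕ → Fin 2) (s : Set ℕ) : Cant :=
  cantOfSet (range (parityCode d s))

lemma ksupp_parityPoint (d : ℕ → Fin 2) (s : Set ℕ) :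
    ksupp (parityPoint d s) = range (parityCode d s) :=
  ksupp_cantOfSet (zero_notMem_range_parityCode d s)

lemma kf_parityPoint (d : ℕ → Fin 2) (s : Set ℕ) :
    kf (parityPoint d s) = 1 - 2 * Real.ofDigits d := by
  have hinf : (ksupp (parityPoint d s)).Infinite := by
    rw [ksupp_parityPoint]
    exact infinite_range_of_injective (parityCode_strictMono d s).injective
  rw [kf_eq_one_sub_two_mul_ofDigits hinf, ksupp_parityPoint,
    (parityCode_strictMono d s).nth_range]
  simp_rw [ofNat_parityCode]

lemma parityPoint_injective (d : ℕ → Fin 2) : Function.Injective (parityPoint d) := by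
  intro s s' h
  have hrange := congrArg ksupp h
  rw [ksupp_parityPoint, ksupp_parityPoint] at hrange
  exact parityCode_injective d <|
    (parityCode_strictMono d s).range_inj (parityCode_strictMono d s') |>.mp hrange

/-- For every `t ∈ [−1,1]` the preimage `f⁻¹({t})` under Kuratowski's function
is uncountable. -/
theorem kf_preimage_uncountable (t : ℝ) (ht : t ∈ Icc (-1 : ℝ) 1) :
    ¬ (kf ⁻¹' {t}).Countable := by
  obtain ⟨d, -, hd⟩ := Real.ofDigits_SurjOn one_lt_two
    (show (1 - t) / 2 ∈ Icc (0 : ℝ) 1 by constructor <;> linarith [ht.1, ht.2])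
  have hfibre : range (parityPoint d) ⊆ kf ⁻¹' {t} := by
    rintro _ ⟨s, rfl⟩
    rw [mem_preimage, kf_parityPoint, hd, mem_singleton_iff]
    ring
  intro hcount
  exact not_countable_univ <| preimage_range (parityPoint d) ▸
    (hcount.mono hfibre).preimage (parityPoint_injective d)
end

section
/- For every t ∈ [−1,1], the preimage f⁻¹({t}) under Kuratowski's function is crowded: it has no isolated points, i.e., every point of f⁻¹({t}) lies in the closure of f⁻¹({t}) \ {that point}. -/
open Set Topology

/-!
A point `x` of a fibre of `kf` is approximated by other points of the same fibre. If `ksupp x`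
is infinite, adding `2` to all its elements from the `n`-th one on keeps every parity, hence
every term of the series. If `ksupp x` has `k` elements, appending an even number `A` and then
only odd numbers adds `2^{-(k+1)} - ∑_{j > k} 2^{-(j+1)} = 0`. Both new points differ from `x`
but agree with it on an initial segment whose length tends to infinity.
-/

open Filter

lemma mem_ksupp_iff {x : Cant} {i : ℕ+} : (i : ℕ) ∈ ksupp x ↔ x i = true :=
  ⟨fun ⟨_, h⟩ => h, fun h => ⟨i.2, h⟩⟩

lemma pos_of_mem_ksupp {x : Cant} {i : ℕ} (h : i ∈ ksupp x) : 0 < i :=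
  h.1

open scoped Classical in
noncomputable def Cant.ofSet (s : Set ℕ) : Cant := fun i => decide ((i : ℕ) ∈ s)

open scoped Classical in
lemma ksupp_ofSet {s : Set ℕ} (hs : 0 ∉ s) : ksupp (Cant.ofSet s) = s := by
  ext i
  simp only [ksupp, Cant.ofSet, mem_ofPred_eq, decide_eq_true_eq]
  exact ⟨fun ⟨_, h⟩ => h, fun h => ⟨Nat.pos_of_ne_zero (by rintro rfl; exact hs h), h⟩⟩

lemma mem_closure_diff_singleton_of_ksupp {S : Set Cant} {x : Cant}
    (h : ∀ n : ℕ, ∃ y ∈ S, y ≠ x ∧ ∀ i < n, (i ∈ ksupp y ↔ i ∈ ksupp x)) :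
    x ∈ closure (S \ {x}) := by
  choose y hyS hyx hy using h
  refine mem_closure_of_tendsto (b := atTop)
    (tendsto_pi_nhds.2 fun i => tendsto_const_nhds.congr' ?_) (.of_forall fun n => ⟨hyS n, hyx n⟩)
  filter_upwards [eventually_gt_atTop (i : ℕ)] with n hn
  rw [eq_comm, Bool.eq_iff_iff, ← mem_ksupp_iff, ← mem_ksupp_iff]
  exact hy n i hn

noncomputable def kfSeq (e : ℕ → ℕ) : ℝ :=
  ∑' j : ℕ, (-1 : ℝ) ^ e j * (2 : ℝ) ^ (-(j + 1 : ℤ))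

lemma two_zpow_neg_succ (j : ℕ) : (2 : ℝ) ^ (-(j + 1 : ℤ)) = 1 / 2 / 2 ^ j := by
  rw [zpow_neg, ← Nat.cast_succ, zpow_natCast, pow_succ]
  field_simp

lemma summable_kfSeq_term (e : ℕ → ℕ) :
    Summable fun j : ℕ => (-1 : ℝ) ^ e j * (2 : ℝ) ^ (-(j + 1 : ℤ)) := by
  refine (summable_geometric_two' 1).of_norm_bounded fun j => ?_
  rw [norm_mul, norm_pow, norm_neg, norm_one, one_pow, one_mul, two_zpow_neg_succ,
    Real.norm_of_nonneg (by positivity)]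

lemma kfSeq_eq_neg_one_of_odd {e : ℕ → ℕ} (he : ∀ j, Odd (e j)) : kfSeq e = -1 := by
  have hsign (j : ℕ) : (-1 : ℝ) ^ e j = -1 := (he j).neg_one_pow
  simp only [kfSeq, hsign, two_zpow_neg_succ, neg_one_mul, tsum_neg, tsum_geometric_two']

lemma kf_eq_kfSeq {x : Cant} {e : ℕ → ℕ} (he : StrictMono e) (hx : ksupp x = range e) :
    kf x = kfSeq e := by
  have hinf : (ksupp x).Infinite := hx ▸ infinite_range_of_injective he.injective
  have hnth : Nat.nth (· ∈ ksupp x) = e :=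
    ((Nat.nth_strictMono hinf).range_inj he).1 ((Nat.range_nth_of_infinite hinf).trans hx)
  exact tsum_congr fun j => by rw [if_pos (Or.inl hinf), hnth]

lemma kfSeq_eq_sum_add (e : ℕ → ℕ) (k : ℕ) :
    kfSeq e = ∑ j ∈ Finset.range k, (-1 : ℝ) ^ e j * (2 : ℝ) ^ (-(j + 1 : ℤ)) +
      kfSeq (fun i => e (i + k)) / 2 ^ k := by
  rw [kfSeq, ← (summable_kfSeq_term e).sum_add_tsum_nat_add k, kfSeq, ← tsum_div_const]
  congr 1
  refine tsum_congr fun i => ?_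
  simp only [two_zpow_neg_succ, pow_add]
  ring

def shiftFrom (n : ℕ) (e : ℕ → ℕ) (j : ℕ) : ℕ := if j < n then e j else e j + 2

section shiftFrom

variable {e : ℕ → ℕ} (n : ℕ)

lemma StrictMono.shiftFrom (he : StrictMono e) : StrictMono (shiftFrom n e) :=
  strictMono_nat_of_lt_succ fun j => by
    have := he (lt_add_one j)
    simp only [_root_.shiftFrom]
    split_ifs <;> omega

lemma kfSeq_shiftFrom : kfSeq (shiftFrom n e) = kfSeq e :=
  tsum_congr fun j => by
    unfold shiftFrom
    split_ifs
    · rfl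
    · rw [pow_add, neg_one_sq, mul_one]

variable {n}

lemma mem_range_shiftFrom_iff (he : StrictMono e) {i : ℕ} (hi : i < e n) :
    i ∈ range (shiftFrom n e) ↔ i ∈ range e := by
  refine exists_congr fun j => ?_
  have : n ≤ j → e n ≤ e j := fun h => he.monotone h
  unfold shiftFrom
  split_ifs with hj <;> omega

lemma apply_notMem_range_shiftFrom (he : StrictMono e) : e n ∉ range (shiftFrom n e) := by
  rintro ⟨j, hj⟩
  unfold shiftFrom at hj
  split_ifs at hj with h
  · exact (he h).ne hj
  · exact absurd (he.monotone (not_lt.1 h)) (by omega)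

end shiftFrom

def padSeq (c : ℕ → ℕ) (k A : ℕ) (j : ℕ) : ℕ :=
  if j < k then c j else if j = k then A else A + 2 * (j - k) - 1

section padSeq

variable {c : ℕ → ℕ} {k A : ℕ}

lemma strictMono_padSeq (hc : StrictMonoOn c (Iio k)) (hcA : ∀ j < k, c j < A) :
    StrictMono (padSeq c k A) :=
  strictMono_nat_of_lt_succ fun j => by
    unfold padSeq
    rcases lt_trichotomy (j + 1) k with h | h | h
    · simp only [if_pos (j.lt_succ_self.trans h), if_pos h]
      exact hc (j.lt_succ_self.trans h) h j.lt_succ_self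
    · have := hcA j (by omega)
      split_ifs <;> omega
    · split_ifs <;> omega

lemma kfSeq_padSeq (hA : Even A) :
    kfSeq (padSeq c k A) = ∑ j ∈ Finset.range k, (-1 : ℝ) ^ c j * (2 : ℝ) ^ (-(j + 1 : ℤ)) := by
  have htail : kfSeq (fun i => padSeq c k A (i + (k + 1))) = -1 :=
    kfSeq_eq_neg_one_of_odd fun i => by
      unfold padSeq
      rw [if_neg (by omega), if_neg (by omega)]
      exact ⟨A / 2 + i, by obtain ⟨r, rfl⟩ := hA; omega⟩
  have hhead : padSeq c k A k = A := by simp [padSeq]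
  rw [kfSeq_eq_sum_add _ (k + 1), htail, Finset.sum_range_succ, hhead, hA.neg_one_pow,
    two_zpow_neg_succ, pow_succ]
  have hfront : ∀ j ∈ Finset.range k, padSeq c k A j = c j := fun j hj =>
    if_pos (Finset.mem_range.1 hj)
  rw [Finset.sum_congr rfl fun j hj => by rw [hfront j hj]]
  ring

lemma mem_range_padSeq_iff {i : ℕ} (hi : i < A) :
    i ∈ range (padSeq c k A) ↔ i ∈ c '' Iio k := by
  constructor
  · rintro ⟨j, rfl⟩
    unfold padSeq at hi ⊢
    split_ifs at hi ⊢ with h₁ h₂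
    · exact ⟨j, h₁, rfl⟩
    all_goals omega
  · rintro ⟨j, hj, rfl⟩
    exact ⟨j, if_pos hj⟩

end padSeq

lemma exists_ne_kf_eq_of_infinite {x : Cant} (hx : (ksupp x).Infinite) (n : ℕ) :
    ∃ y ∈ kf ⁻¹' {kf x}, y ≠ x ∧ ∀ i < n, (i ∈ ksupp y ↔ i ∈ ksupp x) := by
  set e := Nat.nth (· ∈ ksupp x)
  have he : StrictMono e := Nat.nth_strictMono hx
  have hrange : range e = ksupp x := Nat.range_nth_of_infinite hx
  have hen : e n ∈ ksupp x := Nat.nth_mem_of_infinite hx n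
  have hmem {i : ℕ} (hi : i < e n) : i ∈ range (shiftFrom n e) ↔ i ∈ ksupp x :=
    hrange ▸ mem_range_shiftFrom_iff he hi
  have hy : ksupp (Cant.ofSet (range (shiftFrom n e))) = range (shiftFrom n e) :=
    ksupp_ofSet fun h0 => (pos_of_mem_ksupp ((hmem (pos_of_mem_ksupp hen)).1 h0)).false
  refine ⟨Cant.ofSet (range (shiftFrom n e)), ?_, fun hyx => ?_, fun i hi => ?_⟩
  · rw [mem_preimage, mem_singleton_iff, kf_eq_kfSeq (he.shiftFrom n) hy, kfSeq_shiftFrom,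
      kf_eq_kfSeq he hrange.symm]
  · rw [← hyx, hy] at hen
    exact apply_notMem_range_shiftFrom he hen
  · rw [hy]
    exact hmem (hi.trans_le (he.id_le n))

lemma exists_ne_kf_eq_of_finite {x : Cant} (hx : (ksupp x).Finite) (n : ℕ) :
    ∃ y ∈ kf ⁻¹' {kf x}, y ≠ x ∧ ∀ i < n, (i ∈ ksupp y ↔ i ∈ ksupp x) := by
  set c := Nat.nth (· ∈ ksupp x)
  set k := hx.toFinset.card
  obtain ⟨M, hM⟩ := hx.bddAbove
  set A := 2 * (M + n + 1)
  have hAx : ∀ i ∈ ksupp x, i < A := fun i hi => by have := hM hi; omega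
  have himage : c '' Iio k = ksupp x := Nat.image_nth_Iio_card hx
  have hcA : ∀ j < k, c j < A := fun j hj => hAx _ (himage ▸ mem_image_of_mem c hj)
  have hmem {i : ℕ} (hi : i < A) : i ∈ range (padSeq c k A) ↔ i ∈ ksupp x :=
    himage ▸ mem_range_padSeq_iff hi
  have hy : ksupp (Cant.ofSet (range (padSeq c k A))) = range (padSeq c k A) :=
    ksupp_ofSet fun h0 => (pos_of_mem_ksupp ((hmem (by omega)).1 h0)).false
  refine ⟨Cant.ofSet (range (padSeq c k A)), ?_, fun hyx => ?_, fun i hi => ?_⟩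
  · rw [mem_preimage, mem_singleton_iff,
      kf_eq_kfSeq (strictMono_padSeq (Nat.nth_strictMonoOn hx) hcA) hy,
      kfSeq_padSeq ⟨M + n + 1, by ring⟩, kf_eq_sum_of_finite hx, ncard_eq_toFinset_card _ hx]
    rfl
  · have hA : A ∈ ksupp (Cant.ofSet (range (padSeq c k A))) := by
      rw [hy]
      exact ⟨k, by simp [padSeq]⟩
    rw [hyx] at hA
    exact (hAx A hA).false
  · rw [hy]
    exact hmem (by omega)

theorem kf_preimage_crowded_general (t : ℝ) (x : Cant)
    (hx : x ∈ kf ⁻¹' {t}) : x ∈ closure ((kf ⁻¹' {t}) \ {x}) := by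
  obtain rfl : kf x = t := hx
  refine mem_closure_diff_singleton_of_ksupp fun n => ?_
  rcases (ksupp x).finite_or_infinite with hfin | hinf
  · exact exists_ne_kf_eq_of_finite hfin n
  · exact exists_ne_kf_eq_of_infinite hinf n

/-- For every `t ∈ [−1,1]` the preimage `f⁻¹({t})` under Kuratowski's function is crowded:
every one of its points lies in the closure of the preimage minus that point. -/
theorem kf_preimage_crowded (t : ℝ) (ht : t ∈ Icc (-1 : ℝ) 1) (x : Cant)
    (hx : x ∈ kf ⁻¹' {t}) : x ∈ closure ((kf ⁻¹' {t}) \ {x}) :=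
  kf_preimage_crowded_general t x hx
end

section
/- For every t ∈ [−1,1], the set f⁻¹({t}) ∩ E is closed in the subspace E of C. -/
open Set Topology

/-!
On `E` the `j`-th term of the series defining `f` depends only on `c_x(j)`, which is determined
by the finitely many coordinates `x(1), …, x(c_x(j))` and is therefore locally constant on `E`.
The series is dominated by `Σ 2^{-(j+1)}`, so `f` is continuous on `E` and its fibres are closed
in `E`.
-/

theorem Nat.nth_eq_of_forall_le_iff {p q : ℕ → Prop} (hp : (Set.ofPred p).Infinite) {n : ℕ}
    (hpq : ∀ k ≤ Nat.nth p n, q k ↔ p k) : Nat.nth q n = Nat.nth p n := by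
  classical
  have hq : q (Nat.nth p n) := (hpq _ le_rfl).2 (Nat.nth_mem_of_infinite hp n)
  have hcount : Nat.count q (Nat.nth p n) = Nat.count p (Nat.nth p n) :=
    le_antisymm (Nat.count_mono_left fun k hk => (hpq k hk.le).1)
      (Nat.count_mono_left fun k hk => (hpq k hk.le).2)
  calc Nat.nth q n = Nat.nth q (Nat.count q (Nat.nth p n)) := by
        rw [hcount, Nat.count_nth_of_infinite hp]
    _ = Nat.nth p n := Nat.nth_count hq

theorem eventually_forall_coe_le_eq (x : Cant) (N : ℕ) :
    ∀ᶠ y in 𝓝 x, ∀ i : ℕ+, (i : ℕ) ≤ N → y i = x i := by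
  have hfin : {i : ℕ+ | (i : ℕ) ≤ N}.Finite :=
    (Set.finite_Iic N).preimage PNat.coe_injective.injOn
  filter_upwards [(isOpen_set_pi hfin fun i _ => isOpen_discrete {x i}).mem_nhds
    fun i _ => rfl] with y hy i hi
  exact hy i hi

theorem isLocallyConstant_nth_ksupp (j : ℕ) :
    IsLocallyConstant fun z : {x : Cant // (ksupp x).Infinite} =>
      Nat.nth (· ∈ ksupp z.val) j := by
  refine IsLocallyConstant.iff_eventually_eq _ |>.2 fun z => ?_
  filter_upwards [continuousAt_subtype_val.eventually
    (eventually_forall_coe_le_eq z.val (Nat.nth (· ∈ ksupp z.val) j))] with w hw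
  refine Nat.nth_eq_of_forall_le_iff z.2 fun i hi => exists_congr fun hpos => ?_
  rw [hw ⟨i, hpos⟩ hi]

theorem kf_eq_tsum_of_infinite {x : Cant} (hx : (ksupp x).Infinite) :
    kf x = ∑' j : ℕ, (-1 : ℝ) ^ Nat.nth (· ∈ ksupp x) j * (2 : ℝ) ^ (-(j + 1 : ℤ)) :=
  tsum_congr fun _ => if_pos (Or.inl hx)

theorem summable_two_zpow_neg_succ : Summable fun j : ℕ => (2 : ℝ) ^ (-(j + 1 : ℤ)) := by
  have h : ∀ j : ℕ, (2 : ℝ) ^ (-(j + 1 : ℤ)) = (1 / 2) ^ (j + 1) := fun j => by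
    rw [zpow_neg, ← Nat.cast_succ, zpow_natCast, one_div, inv_pow]
  simpa only [h] using (summable_nat_add_iff 1).2 summable_geometric_two

theorem continuous_kf_subtype_infinite :
    Continuous fun z : {x : Cant // (ksupp x).Infinite} => kf z.val := by
  simp only [fun z : {x : Cant // (ksupp x).Infinite} => kf_eq_tsum_of_infinite z.2]
  refine continuous_tsum (fun j => ?_) summable_two_zpow_neg_succ fun j z => ?_
  · exact ((isLocallyConstant_nth_ksupp j).comp _).continuous.mul continuous_const
  · rw [norm_mul, norm_pow, norm_neg, norm_one, one_pow, one_mul,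
      Real.norm_of_nonneg (by positivity)]

theorem kf_preimage_inter_E_closed_general (t : ℝ) :
    IsClosed {z : {x : Cant // (ksupp x).Infinite} | kf z.val = t} :=
  isClosed_singleton.preimage continuous_kf_subtype_infinite

/-- For every `t ∈ [−1,1]`, the set `f⁻¹({t}) ∩ E` is closed in the subspace `E`
of points with infinite support. -/
theorem kf_preimage_inter_E_closed (t : ℝ) (ht : t ∈ Icc (-1 : ℝ) 1) :
    IsClosed {z : {x : Cant // (ksupp x).Infinite} | kf z.val = t} :=
  kf_preimage_inter_E_closed_general t
end

section
/- The graph G has small inductive dimension at most 1, in the following form: for every point p ∈ G and every neighbourhood N of p in G there is a set O, open in G, with p ∈ O ⊆ N, such that the frontier of O in G, regarded as a subspace, has a topological basis consisting of sets clopen in that frontier (i.e., the frontier is zero-dimensional). -/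
open Set Topology

/-- The graph `G` of Kuratowski's function has small inductive dimension at most `1`:
every point has arbitrarily small open neighbourhoods whose frontier in `G` is
zero-dimensional, i.e. the frontier (as a subspace) has a basis of sets clopen in it. -/
theorem graph_kf_ind_le_one (p : {p : Cant × ℝ // p.2 = kf p.1})
    (N : Set {p : Cant × ℝ // p.2 = kf p.1}) (hN : N ∈ 𝓝 p) :
    ∃ O : Set {p : Cant × ℝ // p.2 = kf p.1}, IsOpen O ∧ p ∈ O ∧ O ⊆ N ∧
      ∀ (q : frontier O) (M : Set (frontier O)), M ∈ 𝓝 q →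
        ∃ V : Set (frontier O), IsClopen V ∧ q ∈ V ∧ V ⊆ M := by
  -- extract a basic neighbourhood in `Cant × ℝ`
  rw [nhds_induced] at hN
  obtain ⟨W, hW, hWN⟩ := hN
  rw [mem_nhds_prod_iff] at hW
  obtain ⟨U, hU, J, hJ, hUJ⟩ := hW
  obtain ⟨U', hU'W, hU'open, hpU'⟩ := mem_nhds_iff.mp hU
  obtain ⟨C, hC, hpC, hCU⟩ := compact_exists_isClopen_in_isOpen hU'open hpU'
  obtain ⟨ε, hε, hball⟩ := Metric.mem_nhds_iff.mp hJ
  set a : ℝ := p.val.2 - ε / 2 with ha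
  set b : ℝ := p.val.2 + ε / 2 with hb
  refine ⟨Subtype.val ⁻¹' (C ×ˢ Ioo a b), (hC.isOpen.prod isOpen_Ioo).preimage
    continuous_subtype_val, ⟨hpC, by simp only [mem_Ioo, ha, hb]; constructor <;> linarith⟩,
    ?_, ?_⟩
  · intro z hz
    apply hWN
    apply hUJ
    refine ⟨hU'W (hCU hz.1), hball ?_⟩
    have h1 := hz.2.1; have h2 := hz.2.2
    simp only [Metric.mem_ball, Real.dist_eq]
    simp only [ha, hb, mem_Ioo] at h1 h2
    rw [abs_lt]; constructor <;> linarith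
  · -- frontier is contained in `C ×ˢ {a, b}`
    set O : Set {p : Cant × ℝ // p.2 = kf p.1} := Subtype.val ⁻¹' (C ×ˢ Ioo a b) with hO
    have hOopen : IsOpen O := (hC.isOpen.prod isOpen_Ioo).preimage continuous_subtype_val
    have hfr : frontier O ⊆ Subtype.val ⁻¹' (C ×ˢ ({a, b} : Set ℝ)) := by
      intro z hz
      rw [hOopen.frontier_eq] at hz
      obtain ⟨hz1, hz2⟩ := hz
      have hcl : z ∈ Subtype.val ⁻¹' (C ×ˢ Icc a b) := by
        refine closure_minimal ?_ ((hC.isClosed.prod isClosed_Icc).preimage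
          continuous_subtype_val) hz1
        intro w hw; exact ⟨hw.1, Ioo_subset_Icc_self hw.2⟩
      refine ⟨hcl.1, ?_⟩
      have : z.val.2 ∉ Ioo a b := fun h => hz2 ⟨hcl.1, h⟩
      have h1 := hcl.2.1; have h2 := hcl.2.2
      simp only [mem_Ioo, not_and_or, not_lt] at this
      rcases this with h | h
      · exact Or.inl (le_antisymm h h1)
      · exact Or.inr (le_antisymm h2 h)
    intro q M hM
    -- extract a basic neighbourhood of `q` in `Cant × ℝ`
    rw [nhds_induced] at hM
    obtain ⟨M', hM', hM'M⟩ := hM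
    rw [nhds_induced] at hM'
    obtain ⟨W', hW', hW'M'⟩ := hM'
    rw [mem_nhds_prod_iff] at hW'
    obtain ⟨U2, hU2, J2, hJ2, hU2J2⟩ := hW'
    obtain ⟨U2', hU2'W, hU2'open, hqU2'⟩ := mem_nhds_iff.mp hU2
    obtain ⟨C', hC', hqC', hC'U⟩ := compact_exists_isClopen_in_isOpen hU2'open hqU2'
    obtain ⟨δ, hδ, hball2⟩ := Metric.mem_nhds_iff.mp hJ2
    set r : ℝ := min δ ε with hr
    have hr0 : 0 < r := lt_min hδ hε
    set q2 : ℝ := q.val.val.2 with hq2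
    have hqfr := hfr q.prop
    have hq2ab : q2 = a ∨ q2 = b := hqfr.2
    -- V is the trace of `C' ×ˢ Ioo (q2 - r) (q2 + r)`
    refine ⟨(fun z : frontier O => z.val.val) ⁻¹' (C' ×ˢ Ioo (q2 - r) (q2 + r)), ?_, ?_, ?_⟩
    · constructor
      · -- closed: it coincides with the trace of `C' ×ˢ {q2}`
        have hkey : (fun z : frontier O => z.val.val) ⁻¹' (C' ×ˢ Ioo (q2 - r) (q2 + r))
            = (fun z : frontier O => z.val.val) ⁻¹' (C' ×ˢ ({q2} : Set ℝ)) := by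
          ext z
          have hzab : z.val.val.2 = a ∨ z.val.val.2 = b := (hfr z.prop).2
          have hba : b - a = ε := by rw [hb, ha]; ring
          constructor
          · rintro ⟨h1, h2⟩
            refine ⟨h1, ?_⟩
            have hrε : r ≤ ε := min_le_right _ _
            simp only [mem_Ioo] at h2
            have h21 := h2.1; have h22 := h2.2
            rcases hq2ab with hq | hq <;> rcases hzab with hz | hz <;>
              simp only [mem_singleton_iff] <;> first
                | exact hz.trans hq.symm | (exfalso; linarith)
          · rintro ⟨h1, h2⟩
            simp only [mem_singleton_iff] at h2
            exact ⟨h1, by rw [h2]; simp only [mem_Ioo]; constructor <;> linarith⟩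
        rw [hkey]
        exact (hC'.isClosed.prod isClosed_singleton).preimage
          ((continuous_subtype_val.comp continuous_subtype_val))
      · exact (hC'.isOpen.prod isOpen_Ioo).preimage
          ((continuous_subtype_val.comp continuous_subtype_val))
    · exact ⟨hqC', by simp only [mem_Ioo]; constructor <;> linarith⟩
    · intro z hz
      apply hM'M
      apply hW'M'
      apply hU2J2
      refine ⟨hU2'W (hC'U hz.1), hball2 ?_⟩
      have h1 := hz.2.1; have h2 := hz.2.2
      have hrδ : r ≤ δ := min_le_left _ _
      simp only [Metric.mem_ball, Real.dist_eq]
      rw [abs_lt]; constructor <;> linarith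
end
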